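/- Let p be a prime and let X be a finite simple graph admitting an (m,p)-semiregular automorphism ρ with orbit set S, and let C = S_1 S_2 ... S_k S_1 be a cycle of length k in the quotient graph X_S. Then either X contains a cycle of length kp whose vertices lie in S_1 ∪ ... ∪ S_k and visit the orbits in the cyclic pattern S_1, S_2, ..., S_k repeated p times, or the spanning subgraph of X on S_1 ∪ ... ∪ S_k whose edges are exactly the edges of X joining consecutive orbits S_i and S_{i+1} (indices mod k) is a disjoint union of p cycles of length k; moreover, in the latter case, for every edge S_iS_{i+1} of C each vertex of S_i has exactly one neighbour in S_{i+1}. -/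

import Mathlib

open SimpleGraph

/-- A graph is vertex-transitive if any vertex can be mapped to any other by an automorphism. -/
def SimpleGraph.IsVertexTransitive {V : Type*} (X : SimpleGraph V) : Prop :=
  ∀ u v : V, ∃ φ : X ≃g X, φ u = v

/-- A graph has a Hamilton path if some walk visits every vertex exactly once. -/
def SimpleGraph.HasHamiltonianPath {V : Type*} [DecidableEq V] (X : SimpleGraph V) : Prop :=
  ∃ (u v : V) (w : X.Walk u v), w.IsHamiltonian

/-- A graph has a Hamilton cycle if some closed walk is a Hamiltonian cycle. -/
def SimpleGraph.HasHamiltonianCycle {V : Type*} [DecidableEq V] (X : SimpleGraph V) : Prop :=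
  ∃ (u : V) (w : X.Walk u u), w.IsHamiltonianCycle

/-- A subgroup of the automorphism group acts transitively on the vertices. -/
def SimpleGraph.IsTransitiveSubgroup {V : Type*} (X : SimpleGraph V)
    (G : Subgroup (X ≃g X)) : Prop :=
  ∀ u v : V, ∃ g ∈ G, g u = v

/-- The orbit of a vertex under a subgroup of the automorphism group. -/
def SimpleGraph.autOrbit {V : Type*} (X : SimpleGraph V) (N : Subgroup (X ≃g X))
    (v : V) : Set V :=
  {w | ∃ g ∈ N, g v = w}

/-- `N` is a subgroup of `G` which is normal in `G`. -/
def SimpleGraph.IsNormalIn {V : Type*} (X : SimpleGraph V)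
    (N G : Subgroup (X ≃g X)) : Prop :=
  N ≤ G ∧ ∀ g ∈ G, ∀ n ∈ N, g * n * g⁻¹ ∈ N

/-- `N` is a minimal normal subgroup of the (subgroup) `G`: it is a nontrivial normal
subgroup of `G` and the only normal subgroups of `G` contained in it are `⊥` and `N`. -/
def SimpleGraph.IsMinimalNormalIn {V : Type*} (X : SimpleGraph V)
    (N G : Subgroup (X ≃g X)) : Prop :=
  X.IsNormalIn N G ∧ N ≠ ⊥ ∧
    ∀ M : Subgroup (X ≃g X), X.IsNormalIn M G → M ≤ N → M = ⊥ ∨ M = N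

/-- An automorphism `ρ` is `(m,n)`-semiregular if the cyclic group it generates has exactly
`m` orbits on the vertex set, each of size `n`. -/
def SimpleGraph.IsSemiregular {V : Type*} (X : SimpleGraph V) (ρ : X ≃g X)
    (m n : ℕ) : Prop :=
  (∀ v : V, (X.autOrbit (Subgroup.zpowers ρ) v).ncard = n) ∧
    {S : Set V | ∃ v, S = X.autOrbit (Subgroup.zpowers ρ) v}.ncard = m

/-- The quotient graph of `X` corresponding to a partition `P` of its vertex set. -/
def SimpleGraph.quotientGraph {V : Type*} (X : SimpleGraph V) (P : Set (Set V)) :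
    SimpleGraph ↥P where
  Adj A B := A ≠ B ∧ ∃ a ∈ (A : Set V), ∃ b ∈ (B : Set V), X.Adj a b
  symm := ⟨by
    rintro A B ⟨hne, a, ha, b, hb, hab⟩
    exact ⟨hne.symm, b, hb, a, ha, hab.symm⟩⟩
  loopless := ⟨fun A h => h.1 rfl⟩

/-- The Petersen graph: vertices are the 2-element subsets of a 5-element set, adjacent
when disjoint. -/
def PetersenGraph : SimpleGraph {s : Finset (Fin 5) // s.card = 2} where
  Adj s t := Disjoint (s : Finset (Fin 5)) (t : Finset (Fin 5))
  symm := ⟨fun _ _ h => h.symm⟩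
  loopless := ⟨fun s h => by
    have hs : (s : Finset (Fin 5)) = ⊥ := disjoint_self.mp h
    have h2 := s.2
    rw [hs] at h2
    simp at h2⟩

/-- The truncation of a graph `Y`: vertices are incident vertex-edge pairs, two pairs being
adjacent iff they share the vertex but not the edge, or share the edge but not the vertex. -/
def SimpleGraph.truncation {W : Type*} (Y : SimpleGraph W) :
    SimpleGraph {ve : W × Y.edgeSet // ve.1 ∈ (ve.2 : Sym2 W)} where
  Adj a b := (a.1.1 = b.1.1 ∧ a.1.2 ≠ b.1.2) ∨ (a.1.2 = b.1.2 ∧ a.1.1 ≠ b.1.1)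
  symm := ⟨by
    rintro a b (⟨h1, h2⟩ | ⟨h1, h2⟩)
    · exact Or.inl ⟨h1.symm, h2.symm⟩
    · exact Or.inr ⟨h1.symm, h2.symm⟩⟩
  loopless := ⟨fun a h => by rcases h with ⟨_, h⟩ | ⟨_, h⟩ <;> exact h rfl⟩

/-- A graph is genuinely imprimitive if some transitive subgroup of its automorphism group
has a nontrivial intransitive normal subgroup. -/
def SimpleGraph.IsGenuinelyImprimitive {V : Type*} (X : SimpleGraph V) : Prop :=
  ∃ G N : Subgroup (X ≃g X), X.IsTransitiveSubgroup G ∧ X.IsNormalIn N G ∧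
    N ≠ ⊥ ∧ ¬ X.IsTransitiveSubgroup N

/-- A partition of the vertex set invariant under a subgroup of automorphisms. -/
def SimpleGraph.IsInvariantPartition {V : Type*} (X : SimpleGraph V)
    (G : Subgroup (X ≃g X)) (P : Set (Set V)) : Prop :=
  Setoid.IsPartition P ∧ ∀ g ∈ G, ∀ B ∈ P, (g : X ≃g X) '' B ∈ P

/-- A graph is quasiprimitive if some transitive subgroup of its automorphism group preserves
a nontrivial partition of the vertex set, but no transitive subgroup of the automorphism
group has a nontrivial intransitive normal subgroup. -/
def SimpleGraph.IsQuasiprimitive {V : Type*} (X : SimpleGraph V) : Prop :=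
  (∃ G : Subgroup (X ≃g X), X.IsTransitiveSubgroup G ∧
    ∃ P : Set (Set V), X.IsInvariantPartition G P ∧
      P ≠ Set.range (fun v => ({v} : Set V)) ∧ P ≠ {Set.univ}) ∧
  ¬ X.IsGenuinelyImprimitive

/-- A graph is primitive if every transitive subgroup of its automorphism group preserves
only the trivial partitions of the vertex set. -/
def SimpleGraph.IsPrimitiveGraph {V : Type*} (X : SimpleGraph V) : Prop :=
  ∀ G : Subgroup (X ≃g X), X.IsTransitiveSubgroup G →
    ∀ P : Set (Set V), X.IsInvariantPartition G P →
      P = Set.range (fun v => ({v} : Set V)) ∨ P = {Set.univ}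

/-- The set `U` is a disjoint union of `p` cycles of length `k` of the graph `Y`,
in the sense that there are `p` pairwise vertex-disjoint `k`-cycles of `Y` covering `U`
and using every edge of `Y`. -/
def SimpleGraph.IsDisjointUnionOfCycles {V : Type*} (Y : SimpleGraph V) (U : Set V)
    (p k : ℕ) : Prop :=
  ∃ c : Fin p → ZMod k → V,
    (∀ a, Function.Injective (c a)) ∧
    (∀ a j, Y.Adj (c a j) (c a (j + 1))) ∧
    (Pairwise fun a b => Disjoint (Set.range (c a)) (Set.range (c b))) ∧
    (⋃ a, Set.range (c a)) = U ∧
    (∀ u v, Y.Adj u v → ∃ a j, (c a j = u ∧ c a (j + 1) = v) ∨ (c a j = v ∧ c a (j + 1) = u))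

/-!
Fix base points `x i ∈ S i`. Every vertex has `ρ`-period `p`, so `e ↦ ρ ^ e (x i)` is a bijection
`ZMod p → S i`, and since `ρ` is an automorphism, `ρ ^ e (x i) ~ ρ ^ f (x (i + 1))` iff `f - e`
lies in the voltage set `A i = {z | x i ~ ρ ^ z (x (i + 1))}`, which is nonempty.

If some `A i` has two elements, or the chosen voltages `a i ∈ A i` do not sum to `0`, pick
`b i ∈ A i` with `s = ∑ b i ≠ 0`. Following the voltages `b` once around `C` returns to `S 0`
displaced by `s`, which generates `ZMod p` as `p` is prime, so the lifted walk closes up exactly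
after `k p` steps: this is the long cycle. Otherwise `A i = {a i}` and `∑ a i = 0`, so `a` has a
potential `B` with `B (i + 1) = B i + a i`, and the edges between consecutive orbits are exactly
those of the `p` cycles `i ↦ ρ ^ (t + B i) (x i)`, `t ∈ ZMod p`.
-/

open Finset Function

section Sums

variable {M : Type*} [AddCommMonoid M] {k : ℕ} [NeZero k]

theorem ZMod.sum_range_eq_sum (a : ZMod k → M) : ∑ t ∈ range k, a t = ∑ i, a i :=
  sum_nbij' (fun t => (t : ZMod k)) ZMod.val (by simp) (by simp [ZMod.val_lt])
    (fun t ht => ZMod.val_cast_of_lt (mem_range.mp ht)) (fun i _ => ZMod.natCast_zmod_val i)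
    (fun _ _ => rfl)

theorem ZMod.sum_range_add_mul (a : ZMod k → M) (n t : ℕ) :
    ∑ r ∈ range (n + k * t), a r = ∑ r ∈ range n, a r + t • ∑ i, a i := by
  induction t with
  | zero => simp
  | succ t ih =>
    have hshift : ∑ r ∈ range k, a ((n + k * t + r : ℕ) : ZMod k) = ∑ i, a i := by
      push_cast
      rw [ZMod.natCast_self, zero_mul, add_zero]
      exact (ZMod.sum_range_eq_sum fun i => a ((n : ZMod k) + i)).trans
        (Equiv.sum_comp (Equiv.addLeft _) a)
    rw [mul_add_one, ← add_assoc, sum_range_add, ih, hshift, succ_nsmul, add_assoc]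

theorem ZMod.exists_add_one_eq_add {G : Type*} [AddCommGroup G] (a : ZMod k → G)
    (hsum : ∑ i, a i = 0) : ∃ B : ZMod k → G, ∀ j, B (j + 1) = B j + a j := by
  have hper : Periodic (fun n => ∑ r ∈ range n, a r) k := fun n => by
    simpa [hsum] using ZMod.sum_range_add_mul a n 1
  refine ⟨fun j => ∑ r ∈ range j.val, a r, fun j => ?_⟩
  simp only
  rw [ZMod.val_add, ZMod.val_one_eq_one_mod, Nat.add_mod_mod, hper.map_mod_nat, sum_range_succ,
    ZMod.natCast_zmod_val]

end Sums

theorem Fintype.exists_sum_ne_zero_of_not_unique {ι M : Type*} [Fintype ι] [DecidableEq ι]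
    [AddCommGroup M] {A : ι → Set M} {a : ι → M} (ha : ∀ i, a i ∈ A i)
    (h : ¬ ((∀ i, ∀ z ∈ A i, z = a i) ∧ ∑ i, a i = 0)) :
    ∃ b : ι → M, (∀ i, b i ∈ A i) ∧ ∑ i, b i ≠ 0 := by
  by_cases hsum : ∑ i, a i = 0
  · obtain ⟨i, z, hz, hne⟩ : ∃ i, ∃ z ∈ A i, z ≠ a i := by simpa [hsum] using h
    refine ⟨update a i z, fun j => ?_, ?_⟩
    · rcases eq_or_ne j i with rfl | hj <;> simp [*]
    · have hrest : ∑ j ∈ univ \ {i}, a j = -a i := by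
        rw [eq_neg_iff_add_eq_zero, add_comm,
          ← sum_eq_add_sum_sdiff_singleton_of_mem (mem_univ i) a, hsum]
      rw [sum_update_of_mem (mem_univ i), hrest, ← sub_eq_add_neg]
      exact sub_ne_zero.mpr hne
  · exact ⟨a, ha, hsum⟩

theorem ZMod.eq_of_sum_range_eq {k p : ℕ} [NeZero k] [Fact p.Prime] {b : ZMod k → ZMod p}
    (hb : ∑ i, b i ≠ 0) {n n' : ℕ} (hn : n < k * p) (hn' : n' < k * p)
    (hmod : (n : ZMod k) = n') (hsum : ∑ r ∈ range n, b r = ∑ r ∈ range n', b r) : n = n' := by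
  have hdecomp : ∀ m, ∑ r ∈ range m, b r = ∑ r ∈ range (m % k), b r + (m / k) • ∑ i, b i :=
    fun m => by conv_lhs => rw [← Nat.mod_add_div m k, ZMod.sum_range_add_mul]
  rw [ZMod.natCast_eq_natCast_iff'] at hmod
  rw [hdecomp, hdecomp n', hmod, add_right_inj, nsmul_eq_mul, nsmul_eq_mul] at hsum
  have hdiv : n / k = n' / k := by
    simpa [Nat.mod_eq_of_lt (Nat.div_lt_of_lt_mul hn),
      Nat.mod_eq_of_lt (Nat.div_lt_of_lt_mul hn')] using
      (ZMod.natCast_eq_natCast_iff' _ _ p).mp (mul_right_cancel₀ hb hsum)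
  rw [← Nat.mod_add_div n k, ← Nat.mod_add_div n' k, hmod, hdiv]

namespace SimpleGraph

variable {V : Type*} {X : SimpleGraph V}

theorem autOrbit_eq_orbit (N : Subgroup (X ≃g X)) (v : V) :
    X.autOrbit N v = MulAction.orbit N v := by
  ext w
  simp [autOrbit, MulAction.mem_orbit_iff]

theorem pairwise_disjoint_autOrbit {ι : Type*} {N : Subgroup (X ≃g X)} {S : ι → Set V}
    (hS : ∀ i, ∃ v, S i = X.autOrbit N v) (hinj : Injective S) :
    Pairwise (Disjoint on S) := by
  intro i j hij
  obtain ⟨v, hv⟩ := hS i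
  obtain ⟨v', hv'⟩ := hS j
  refine Set.disjoint_left.mpr fun w hwi hwj => hij (hinj ?_)
  rw [hv, autOrbit_eq_orbit] at hwi
  rw [hv', autOrbit_eq_orbit] at hwj
  rw [hv, hv', autOrbit_eq_orbit, autOrbit_eq_orbit, ← MulAction.orbit_eq_iff.mpr hwi,
    MulAction.orbit_eq_iff.mpr hwj]

theorem minimalPeriod_eq_ncard_autOrbit [Finite V] (ρ : X ≃g X) (v : V) :
    minimalPeriod ρ v = (X.autOrbit (Subgroup.zpowers ρ) v).ncard := by
  classical
  have := Fintype.ofFinite V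
  rw [autOrbit_eq_orbit, Set.ncard_eq_toFinset_card', Set.toFinset_card]
  exact MulAction.minimalPeriod_eq_card (a := ρ) (b := v)

/-- `ρ ^ e` for `e : ZMod p`, computed with the representative `e.val`; the choice of
representative is immaterial once every vertex has `ρ`-period `p`. -/
def Iso.zmodPow (ρ : X ≃g X) (p : ℕ) (e : ZMod p) : X ≃g X := ρ ^ (e.val : ℤ)

section Period

variable {ρ : X ≃g X} {p : ℕ} (hper : ∀ v, minimalPeriod ρ v = p)
include hper

theorem zpow_apply_eq_zpow_apply_iff {v : V} {n m : ℤ} :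
    (ρ ^ n) v = (ρ ^ m) v ↔ (n : ZMod p) = m := by
  have hsplit : (ρ ^ n) v = (ρ ^ (n - m)) ((ρ ^ m) v) := by
    rw [← RelIso.mul_apply, ← zpow_add, sub_add_cancel]
  rw [hsplit, ZMod.intCast_eq_intCast_iff_dvd_sub, ← hper ((ρ ^ m) v), ← dvd_neg, neg_sub]
  exact MulAction.zpow_smul_eq_iff_minimalPeriod_dvd (a := ρ)

variable [NeZero p]

theorem Iso.zmodPow_intCast_apply (n : ℤ) (v : V) : ρ.zmodPow p n v = (ρ ^ n) v := by
  rw [zmodPow, zpow_apply_eq_zpow_apply_iff hper]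
  simp

theorem Iso.zmodPow_add_apply (e f : ZMod p) (v : V) :
    ρ.zmodPow p (e + f) v = ρ.zmodPow p e (ρ.zmodPow p f v) := by
  rw [zmodPow, zmodPow, zmodPow, ← RelIso.mul_apply, ← zpow_add,
    zpow_apply_eq_zpow_apply_iff hper]
  simp

theorem Iso.zmodPow_apply_injective (v : V) : Injective (ρ.zmodPow p · v) := by
  intro e f h
  simpa using (zpow_apply_eq_zpow_apply_iff hper).mp h

theorem Iso.adj_zmodPow_iff {e f : ZMod p} {u w : V} :
    X.Adj (ρ.zmodPow p e u) (ρ.zmodPow p f w) ↔ X.Adj u (ρ.zmodPow p (f - e) w) := by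
  conv_lhs => rw [← add_sub_cancel e f, zmodPow_add_apply hper]
  exact (ρ.zmodPow p e).map_adj_iff

theorem autOrbit_zpowers_eq_range (v : V) :
    X.autOrbit (Subgroup.zpowers ρ) v = Set.range (ρ.zmodPow p · v) := by
  ext w
  simp only [autOrbit, Subgroup.exists_mem_zpowers, Set.mem_range]
  constructor
  · rintro ⟨n, rfl⟩
    exact ⟨n, ρ.zmodPow_intCast_apply hper n v⟩
  · rintro ⟨e, rfl⟩
    exact ⟨_, rfl⟩

end Period

section Lift

variable {ρ : X ≃g X} {p k : ℕ} {S : ZMod k → Set V} {x : ZMod k → V}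
  (hS : ∀ i, S i = Set.range (ρ.zmodPow p · (x i))) (hSdisj : Pairwise (Disjoint on S))

include hS in
theorem zmodPow_apply_mem (e : ZMod p) (i : ZMod k) : ρ.zmodPow p e (x i) ∈ S i :=
  (hS i).symm ▸ ⟨e, rfl⟩

include hS hSdisj in
theorem eq_of_zmodPow_apply_eq {i j : ZMod k} {e f : ZMod p}
    (h : ρ.zmodPow p e (x i) = ρ.zmodPow p f (x j)) : i = j := by
  by_contra hij
  exact Set.disjoint_left.mp (hSdisj hij) (zmodPow_apply_mem hS e i)
    (h ▸ zmodPow_apply_mem hS f j)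

variable [NeZero p] (hper : ∀ v, minimalPeriod ρ v = p)
include hper

include hS hSdisj in
theorem exists_injective_cycle_of_sum_ne_zero [NeZero k] [Fact p.Prime] {b : ZMod k → ZMod p}
    (hb : ∀ i, X.Adj (x i) (ρ.zmodPow p (b i) (x (i + 1)))) (hsum : ∑ i, b i ≠ 0) :
    ∃ c : ZMod (k * p) → V, Injective c ∧ (∀ j, X.Adj (c j) (c (j + 1))) ∧
      ∀ j, c j ∈ S (ZMod.castHom (dvd_mul_right k p) (ZMod k) j) := by
  set w : ℕ → V := fun n => ρ.zmodPow p (∑ r ∈ range n, b r) (x n)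
  have hw_adj : ∀ n, X.Adj (w n) (w (n + 1)) := fun n => by
    simp only [w, sum_range_succ, Nat.cast_succ]
    rw [ρ.adj_zmodPow_iff hper, add_sub_cancel_left]
    exact hb n
  have hw_per : Periodic w (k * p) := fun n => by
    simp only [w, ZMod.sum_range_add_mul, nsmul_eq_mul, Nat.cast_add, Nat.cast_mul,
      ZMod.natCast_self, zero_mul, add_zero]
  have hw_inj : ∀ n n', n < k * p → n' < k * p → w n = w n' → n = n' := by
    intro n n' hn hn' h
    have hmod : (n : ZMod k) = n' := eq_of_zmodPow_apply_eq hS hSdisj h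
    refine ZMod.eq_of_sum_range_eq hsum hn hn' hmod (ρ.zmodPow_apply_injective hper (x n) ?_)
    simpa [w, hmod] using h
  refine ⟨fun j => w j.val,
    fun j j' h => ZMod.val_injective _ (hw_inj _ _ (ZMod.val_lt j) (ZMod.val_lt j') h),
    fun j => ?_, fun j => ?_⟩
  · change X.Adj (w j.val) (w (j + 1).val)
    rw [ZMod.val_add, ZMod.val_one_eq_one_mod, Nat.add_mod_mod, hw_per.map_mod_nat]
    exact hw_adj _
  · rw [ZMod.castHom_apply, ← ZMod.natCast_val]
    exact zmodPow_apply_mem hS _ _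

variable {a : ZMod k → ZMod p} (ha : ∀ i z, X.Adj (x i) (ρ.zmodPow p z (x (i + 1))) ↔ z = a i)
include ha

theorem adj_zmodPow_iff_eq_add {i : ZMod k} {e f : ZMod p} :
    X.Adj (ρ.zmodPow p e (x i)) (ρ.zmodPow p f (x (i + 1))) ↔ f = e + a i := by
  rw [ρ.adj_zmodPow_iff hper, ha, sub_eq_iff_eq_add']

include hS in
theorem ncard_adj_next_eq_one (i : ZMod k) {u : V} (hu : u ∈ S i) :
    {w ∈ S (i + 1) | X.Adj u w}.ncard = 1 := by
  rw [hS] at hu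
  obtain ⟨e, rfl⟩ := hu
  refine Set.ncard_eq_one.mpr ⟨ρ.zmodPow p (e + a i) (x (i + 1)), Set.ext fun w => ?_⟩
  rw [hS, Set.mem_sep_iff, Set.mem_singleton_iff]
  constructor
  · rintro ⟨⟨f, rfl⟩, hadj⟩
    rw [(adj_zmodPow_iff_eq_add hper ha).mp hadj]
  · rintro rfl
    exact ⟨⟨_, rfl⟩, (adj_zmodPow_iff_eq_add hper ha).mpr rfl⟩

include hS hSdisj in
theorem isDisjointUnionOfCycles_of_sum_eq_zero [NeZero k] (hsum : ∑ i, a i = 0) :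
    (fromRel fun u v => X.Adj u v ∧ ∃ i, u ∈ S i ∧ v ∈ S (i + 1)).IsDisjointUnionOfCycles
      (⋃ i, S i) p k := by
  obtain ⟨B, hB⟩ := ZMod.exists_add_one_eq_add a hsum
  let t : Fin p ≃ ZMod p := (ZMod.finEquiv p).toEquiv
  set c : Fin p → ZMod k → V := fun s j => ρ.zmodPow p (t s + B j) (x j)
  have hc_adj : ∀ s j, X.Adj (c s j) (c s (j + 1)) := fun s j =>
    (adj_zmodPow_iff_eq_add hper ha).mpr (by rw [hB, add_assoc])
  have hc_edge : ∀ i u v, X.Adj u v → u ∈ S i → v ∈ S (i + 1) →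
      ∃ s, c s i = u ∧ c s (i + 1) = v := by
    intro i u v huv hu hv
    rw [hS] at hu hv
    obtain ⟨e, rfl⟩ := hu
    obtain ⟨f, rfl⟩ := hv
    refine ⟨t.symm (e - B i), by simp [c], ?_⟩
    rw [(adj_zmodPow_iff_eq_add hper ha).mp huv]
    simp only [c, t.apply_symm_apply, hB, ← add_assoc, sub_add_cancel]
  refine ⟨c, fun s j j' h => eq_of_zmodPow_apply_eq hS hSdisj h,
    fun s j => (fromRel_adj _ _ _).mpr ⟨(hc_adj s j).ne,
      Or.inl ⟨hc_adj s j, j, zmodPow_apply_mem hS _ _, zmodPow_apply_mem hS _ _⟩⟩, ?_, ?_, ?_⟩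
  · intro s s' hss'
    refine Set.disjoint_left.mpr ?_
    rintro _ ⟨j, rfl⟩ ⟨j', h⟩
    obtain rfl := eq_of_zmodPow_apply_eq hS hSdisj h
    exact hss' (t.injective (add_right_cancel (ρ.zmodPow_apply_injective hper _ h)).symm)
  · ext w
    simp only [Set.mem_iUnion, Set.mem_range, hS]
    constructor
    · rintro ⟨s, j, rfl⟩
      exact ⟨j, _, rfl⟩
    · rintro ⟨j, e, rfl⟩
      exact ⟨t.symm (e - B j), j, by simp [c]⟩
  · intro u v huv
    obtain ⟨-, ⟨huv, i, hu, hv⟩ | ⟨hvu, i, hv, hu⟩⟩ := (fromRel_adj _ _ _).mp huv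
    · obtain ⟨s, hs⟩ := hc_edge i u v huv hu hv
      exact ⟨s, i, Or.inl hs⟩
    · obtain ⟨s, hs⟩ := hc_edge i v u hvu hv hu
      exact ⟨s, i, Or.inr hs⟩

end Lift

end SimpleGraph

theorem lift_of_cycle_in_quotient
    {V : Type*} [Fintype V] (p m k : ℕ) (hp : p.Prime) (hk : 3 ≤ k)
    (X : SimpleGraph V) (ρ : X ≃g X) (hρ : X.IsSemiregular ρ m p)
    (S : ZMod k → Set V)
    (hSorb : ∀ i, ∃ v, S i = X.autOrbit (Subgroup.zpowers ρ) v)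
    (hSinj : Function.Injective S)
    (hSadj : ∀ i : ZMod k, ∃ u ∈ S i, ∃ v ∈ S (i + 1), X.Adj u v) :
    (∃ c : ZMod (k * p) → V, Function.Injective c ∧
        (∀ j, X.Adj (c j) (c (j + 1))) ∧
        (∀ j, c j ∈ S (ZMod.castHom (dvd_mul_right k p) (ZMod k) j))) ∨
      ((SimpleGraph.fromRel fun u v =>
            X.Adj u v ∧ ∃ i : ZMod k, u ∈ S i ∧ v ∈ S (i + 1)).IsDisjointUnionOfCycles
          (⋃ i, S i) p k ∧
        ∀ i : ZMod k, ∀ u ∈ S i, {w ∈ S (i + 1) | X.Adj u w}.ncard = 1) := by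
  classical
  have : Fact p.Prime := ⟨hp⟩
  have : NeZero p := ⟨hp.ne_zero⟩
  have : NeZero k := ⟨by omega⟩
  have hper (v : V) : minimalPeriod ρ v = p :=
    (minimalPeriod_eq_ncard_autOrbit ρ v).trans (hρ.1 v)
  have hSdisj := pairwise_disjoint_autOrbit hSorb hSinj
  choose x hx using hSorb
  have hS (i : ZMod k) : S i = Set.range (ρ.zmodPow p · (x i)) :=
    (hx i).trans (autOrbit_zpowers_eq_range hper (x i))
  have hvoltage (i : ZMod k) : ∃ z, X.Adj (x i) (ρ.zmodPow p z (x (i + 1))) := by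
    obtain ⟨u, hu, v, hv, huv⟩ := hSadj i
    rw [hS] at hu hv
    obtain ⟨e, rfl⟩ := hu
    obtain ⟨f, rfl⟩ := hv
    exact ⟨f - e, (ρ.adj_zmodPow_iff hper).mp huv⟩
  choose a ha using hvoltage
  let A (i : ZMod k) : Set (ZMod p) := {z | X.Adj (x i) (ρ.zmodPow p z (x (i + 1)))}
  by_cases hunique : (∀ i, ∀ z ∈ A i, z = a i) ∧ ∑ i, a i = 0
  · have ha' (i : ZMod k) (z : ZMod p) : X.Adj (x i) (ρ.zmodPow p z (x (i + 1))) ↔ z = a i :=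
      ⟨hunique.1 i z, fun h => h ▸ ha i⟩
    exact .inr ⟨isDisjointUnionOfCycles_of_sum_eq_zero hS hSdisj hper ha' hunique.2,
      fun i _ hu => ncard_adj_next_eq_one hS hper ha' i hu⟩
  · obtain ⟨b, hb, hsum⟩ := Fintype.exists_sum_ne_zero_of_not_unique (A := A) ha hunique
    exact .inl (exists_injective_cycle_of_sum_ne_zero hS hSdisj hper hb hsum)
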